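/- Let F be a sparseness measure with cost function J_F on ℝⁿ, let 0 < p ≤ 1, suppose F is non-decreasing on [0,∞) and t ↦ F(t)/t^p is non-increasing on (0,∞), and let k ≥ 1. Then: (i) every linear subspace ν of ℝⁿ satisfying NSP at sparsity k for the ℓ_p cost function J(x) = ∑_{i=1}^n |x_i|^p also satisfies NSP at sparsity k for J_F; and (ii) every m×n real matrix A that satisfies RRC at sparsity k for the ℓ_p cost function with some constant also satisfies RRC at sparsity k for J_F with some constant. -/

import Mathlib

noncomputable section

/-- `F : ℝ → ℝ` is a sparseness measure: nonnegative on `[0,∞)`,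
vanishing exactly at `0`, and `F (|·|)` is subadditive on `ℝ`. -/
def SparsenessMeasure (F : ℝ → ℝ) : Prop :=
  (∀ t : ℝ, 0 ≤ t → 0 ≤ F t) ∧
  (∀ t : ℝ, 0 ≤ t → (F t = 0 ↔ t = 0)) ∧
  (∀ x y : ℝ, F |x + y| ≤ F |x| + F |y|)

/-- The cost function `J(x) = ∑ i, F |x i|` on `ℝⁿ`. -/
def costJ {n : ℕ} (F : ℝ → ℝ) (x : EuclideanSpace ℝ (Fin n)) : ℝ :=
  ∑ i, F |x i|

/-- The restricted cost `J(x_T) = ∑ i ∈ T, F |x i|`. -/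
def costJT {n : ℕ} (F : ℝ → ℝ) (T : Finset (Fin n)) (x : EuclideanSpace ℝ (Fin n)) : ℝ :=
  ∑ i ∈ T, F |x i|

/-- `x` has at most `k` nonzero entries. -/
def Sparse {n : ℕ} (k : ℕ) (x : EuclideanSpace ℝ (Fin n)) : Prop :=
  ∃ T : Finset (Fin n), T.card ≤ k ∧ ∀ i ∉ T, x i = 0

/-- The matrix `A` acting as a continuous linear map between Euclidean spaces. -/
def mulVecCLM {m n : ℕ} (A : Matrix (Fin m) (Fin n) ℝ) :
    EuclideanSpace ℝ (Fin n) →L[ℝ] EuclideanSpace ℝ (Fin m) :=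
  (((EuclideanSpace.equiv (Fin m) ℝ).symm : (Fin m → ℝ) →L[ℝ] EuclideanSpace ℝ (Fin m)).comp
    (Matrix.mulVecLin A).toContinuousLinearMap).comp
    ((EuclideanSpace.equiv (Fin n) ℝ) : EuclideanSpace ℝ (Fin n) →L[ℝ] (Fin n → ℝ))

/-- `A` satisfies the robust recovery condition at sparsity `k` for the cost `J_F`
with constant `C`: for every `k`-sparse `x̄`, every `ε > 0`, every noise `v` with
`‖v‖ ≤ ε`, and every feasible `x̂` with `J(x̂) ≤ J(x̄)`, one has `‖x̄ - x̂‖ ≤ C ε`. -/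
def RRC {m n : ℕ} (A : Matrix (Fin m) (Fin n) ℝ) (k : ℕ) (F : ℝ → ℝ) (C : ℝ) : Prop :=
  ∀ xbar : EuclideanSpace ℝ (Fin n), Sparse k xbar →
    ∀ ε : ℝ, 0 < ε →
      ∀ v : EuclideanSpace ℝ (Fin m), ‖v‖ ≤ ε →
        ∀ xhat : EuclideanSpace ℝ (Fin n),
          ‖mulVecCLM A xhat - (mulVecCLM A xbar + v)‖ ≤ ε →
            costJ F xhat ≤ costJ F xbar → ‖xbar - xhat‖ ≤ C * ε

/-- The robust null space condition with parameter `d` for `(A, k, J_F)`. -/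
def RNSP {m n : ℕ} (A : Matrix (Fin m) (Fin n) ℝ) (k : ℕ) (F : ℝ → ℝ) (d : ℝ) : Prop :=
  ∀ z ∈ LinearMap.ker (mulVecCLM A).toLinearMap, z ≠ 0 →
    ∀ η : EuclideanSpace ℝ (Fin n), ‖η‖ < d * ‖z‖ →
      ∀ T : Finset (Fin n), T.card ≤ k →
        costJT F T (z + η) < costJT F Tᶜ (z + η)

/-- The subspace `ν` satisfies the null space property at sparsity `k` for `J_F`. -/
def NSP {n : ℕ} (ν : Submodule ℝ (EuclideanSpace ℝ (Fin n))) (k : ℕ) (F : ℝ → ℝ) : Prop :=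
  ∀ z ∈ ν, z ≠ 0 → ∀ T : Finset (Fin n), T.card ≤ k → costJT F T z < costJT F Tᶜ z

/-- The orthogonal projection onto `ν`, as a continuous linear map `ℝⁿ → ℝⁿ`. -/
def projCLM {n : ℕ} (ν : Submodule ℝ (EuclideanSpace ℝ (Fin n))) :
    EuclideanSpace ℝ (Fin n) →L[ℝ] EuclideanSpace ℝ (Fin n) :=
  ν.subtypeL.comp (ν.orthogonalProjectionOnto)

/-!
Let `T` index the largest entries of `x` in absolute value and let `t₀` be the largest
`|x j|` with `j ∉ T`. As `F t / t ^ p` is non-increasing, `c = F t₀ / t₀ ^ p` gives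
`F |x i| ≤ c |x i| ^ p` for `i ∈ T` and `c |x j| ^ p ≤ F |x j|` for `j ∉ T`, so the `ℓ_p`
null space inequality on `T` yields the `J_F` one; as `F` is non-decreasing, `T` is the worst
index set of its size for `J_F`. For RRC, the error `h = x̂ - x̄` violates the `J_F` null space
inequality on the support of `x̄`, hence on the top set `T` of `h`, hence the `ℓ_p` one; so
`(h_T, -h_{Tᶜ})` is an `ℓ_p` instance with residual `‖A h‖ ≤ 2ε`, and `‖h‖ ≤ 2Cε`.
-/

open Finset Real

section TopSets

variable {ι α M : Type*}

def IsTopSet [LE α] (g : ι → α) (T : Finset ι) : Prop :=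
  ∀ i ∈ T, ∀ j ∉ T, g j ≤ g i

theorem IsTopSet.comp_monotoneOn [Preorder α] [Preorder M] {g : ι → α} {T : Finset ι}
    {f : α → M} {s : Set α} (htop : IsTopSet g T) (hf : MonotoneOn f s) (hg : ∀ i, g i ∈ s) :
    IsTopSet (fun i => f (g i)) T :=
  fun i hi j hj => hf (hg j) (hg i) (htop i hi j hj)

theorem exists_isTopSet [Fintype ι] [DecidableEq ι] [LinearOrder α] (g : ι → α) {m : ℕ}
    (hm : m ≤ Fintype.card ι) : ∃ T : Finset ι, #T = m ∧ IsTopSet g T := by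
  induction m with
  | zero => exact ⟨∅, rfl, by simp [IsTopSet]⟩
  | succ m ih =>
    obtain ⟨T, hcard, htop⟩ := ih (by omega)
    have hne : Tᶜ.Nonempty := by
      rw [← card_pos, card_compl, hcard]
      omega
    obtain ⟨j₀, hj₀, hmax⟩ := exists_max_image Tᶜ g hne
    rw [mem_compl] at hj₀
    refine ⟨insert j₀ T, by rw [card_insert_of_notMem hj₀, hcard], ?_⟩
    intro i hi j hj
    rw [mem_insert, not_or] at hj
    rcases mem_insert.1 hi with rfl | hiT
    · exact hmax j (mem_compl.2 hj.2)
    · exact htop i hiT j hj.2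

variable [AddCommMonoid M] [LinearOrder M] [IsOrderedAddMonoid M]

theorem sum_le_sum_of_card_le_of_forall_le {w : ι → M} {X Y : Finset ι} (hcard : #X ≤ #Y)
    (hXY : ∀ x ∈ X, ∀ y ∈ Y, w x ≤ w y) (hY : ∀ y ∈ Y, 0 ≤ w y) :
    ∑ x ∈ X, w x ≤ ∑ y ∈ Y, w y := by
  rcases Y.eq_empty_or_nonempty with rfl | hYne
  · rw [card_eq_zero.1 (Nat.le_zero.1 hcard)]
  obtain ⟨y₀, hy₀, hmin⟩ := Y.exists_min_image w hYne
  calc ∑ x ∈ X, w x ≤ #X • w y₀ := sum_le_card_nsmul X w _ fun x hx => hXY x hx y₀ hy₀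
    _ ≤ #Y • w y₀ := nsmul_le_nsmul_left (hY y₀ hy₀) hcard
    _ ≤ ∑ y ∈ Y, w y := card_nsmul_le_sum Y w _ hmin

theorem IsTopSet.sum_le_sum [DecidableEq ι] {w : ι → M} {T T' : Finset ι}
    (htop : IsTopSet w T') (hw : ∀ i, 0 ≤ w i) (hcard : #T ≤ #T') :
    ∑ i ∈ T, w i ≤ ∑ i ∈ T', w i := by
  rw [← sum_inter_add_sum_sdiff T T', ← sum_inter_add_sum_sdiff T' T, inter_comm]
  have hsdiff : ∑ i ∈ T \ T', w i ≤ ∑ i ∈ T' \ T, w i :=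
    sum_le_sum_of_card_le_of_forall_le (card_sdiff_le_card_sdiff_iff.2 hcard)
      (fun x hx y hy => htop y (mem_sdiff.1 hy).1 x (mem_sdiff.1 hx).2) fun y _ => hw y
  exact add_le_add_right hsdiff _

end TopSets

namespace SparsenessMeasure

variable {F : ℝ → ℝ}

theorem map_zero (hF : SparsenessMeasure F) : F 0 = 0 := (hF.2.1 0 le_rfl).2 rfl

theorem nonneg (hF : SparsenessMeasure F) {t : ℝ} (ht : 0 ≤ t) : 0 ≤ F t := hF.1 t ht

theorem pos (hF : SparsenessMeasure F) {t : ℝ} (ht : 0 < t) : 0 < F t :=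
  (hF.nonneg ht.le).lt_of_ne' fun h => ht.ne' ((hF.2.1 t ht.le).1 h)

theorem abs_sub_le (hF : SparsenessMeasure F) (x y : ℝ) : F |x - y| ≤ F |x| + F |y| := by
  simpa [sub_eq_add_neg] using hF.2.2 x (-y)

end SparsenessMeasure

section RatioBounds

variable {F : ℝ → ℝ} {p : ℝ}

theorem le_div_rpow_mul_rpow_of_le (hratio : AntitoneOn (fun t => F t / t ^ p) (Set.Ioi 0))
    {t₀ s : ℝ} (ht₀ : 0 < t₀) (hs : t₀ ≤ s) : F s ≤ F t₀ / t₀ ^ p * s ^ p := by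
  have hsp : 0 < s ^ p := rpow_pos_of_pos (ht₀.trans_le hs) p
  calc F s = F s / s ^ p * s ^ p := (div_mul_cancel₀ _ hsp.ne').symm
    _ ≤ F t₀ / t₀ ^ p * s ^ p :=
      mul_le_mul_of_nonneg_right (hratio ht₀ (ht₀.trans_le hs) hs) hsp.le

theorem div_rpow_mul_rpow_le_of_le (hratio : AntitoneOn (fun t => F t / t ^ p) (Set.Ioi 0))
    (hp : 0 < p) (hF0 : 0 ≤ F 0) {t₀ s : ℝ} (hs0 : 0 ≤ s) (hs : s ≤ t₀) :
    F t₀ / t₀ ^ p * s ^ p ≤ F s := by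
  rcases hs0.eq_or_lt with rfl | hs0
  · simpa [zero_rpow hp.ne'] using hF0
  have hsp : 0 < s ^ p := rpow_pos_of_pos hs0 p
  calc F t₀ / t₀ ^ p * s ^ p ≤ F s / s ^ p * s ^ p :=
      mul_le_mul_of_nonneg_right (hratio hs0 (hs0.trans_le hs) hs) hsp.le
    _ = F s := div_mul_cancel₀ _ hsp.ne'

end RatioBounds

section Costs

variable {n : ℕ} {F : ℝ → ℝ} {p : ℝ} {T T' : Finset (Fin n)} {x : EuclideanSpace ℝ (Fin n)}

theorem costJT_add_costJT_compl (F : ℝ → ℝ) (T : Finset (Fin n)) (x : EuclideanSpace ℝ (Fin n)) :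
    costJT F T x + costJT F Tᶜ x = costJ F x :=
  sum_add_sum_compl T _

theorem costJT_lt_costJT_compl_of_rpow (hF : SparsenessMeasure F) (hp : 0 < p)
    (hratio : AntitoneOn (fun t => F t / t ^ p) (Set.Ioi 0))
    (htop : IsTopSet (fun i => |x i|) T)
    (hlt : costJT (fun t => |t| ^ p) T x < costJT (fun t => |t| ^ p) Tᶜ x) :
    costJT F T x < costJT F Tᶜ x := by
  simp only [costJT, abs_abs] at hlt ⊢
  obtain ⟨j₁, hj₁, hxj₁⟩ : ∃ j ∈ Tᶜ, x j ≠ 0 := by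
    by_contra! h
    rw [sum_eq_zero (s := Tᶜ) fun j hj => by rw [h j hj, abs_zero, zero_rpow hp.ne']] at hlt
    exact hlt.not_ge (sum_nonneg fun i _ => by positivity)
  obtain ⟨j₀, hj₀, hmax⟩ := Tᶜ.exists_max_image (fun j => |x j|) ⟨j₁, hj₁⟩
  have ht₀ : 0 < |x j₀| := (abs_pos.2 hxj₁).trans_le (hmax j₁ hj₁)
  set c := F |x j₀| / |x j₀| ^ p
  have hc : 0 < c := div_pos (hF.pos ht₀) (rpow_pos_of_pos ht₀ p)
  calc ∑ i ∈ T, F |x i| ≤ ∑ i ∈ T, c * |x i| ^ p :=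
        sum_le_sum fun i hi =>
          le_div_rpow_mul_rpow_of_le hratio ht₀ (htop i hi j₀ (mem_compl.1 hj₀))
    _ = c * ∑ i ∈ T, |x i| ^ p := (mul_sum _ _ _).symm
    _ < c * ∑ i ∈ Tᶜ, |x i| ^ p := mul_lt_mul_of_pos_left hlt hc
    _ = ∑ i ∈ Tᶜ, c * |x i| ^ p := mul_sum _ _ _
    _ ≤ ∑ i ∈ Tᶜ, F |x i| :=
        sum_le_sum fun j hj =>
          div_rpow_mul_rpow_le_of_le hratio hp (hF.nonneg le_rfl) (abs_nonneg _) (hmax j hj)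

theorem IsTopSet.costJT_sub_costJT_compl_le (hF : SparsenessMeasure F)
    (hmono : MonotoneOn F (Set.Ici 0)) (htop : IsTopSet (fun i => |x i|) T') (hcard : #T ≤ #T') :
    costJT F T x - costJT F Tᶜ x ≤ costJT F T' x - costJT F T'ᶜ x := by
  have hsum : costJT F T x ≤ costJT F T' x :=
    (htop.comp_monotoneOn hmono fun i => abs_nonneg (x i)).sum_le_sum
      (fun i => hF.nonneg (abs_nonneg _)) hcard
  linarith [costJT_add_costJT_compl F T x, costJT_add_costJT_compl F T' x]

theorem costJT_compl_le_costJT_of_costJ_le (hF : SparsenessMeasure F)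
    {xbar xhat : EuclideanSpace ℝ (Fin n)} (hsupp : ∀ i ∉ T, xbar i = 0)
    (hcost : costJ F xhat ≤ costJ F xbar) :
    costJT F Tᶜ (xhat - xbar) ≤ costJT F T (xhat - xbar) := by
  have hbar : costJ F xbar ≤ costJT F T xhat + costJT F T (xhat - xbar) := by
    rw [← costJT_add_costJT_compl F T]
    simp only [costJT]
    rw [sum_eq_zero (s := Tᶜ) fun i hi => by rw [hsupp i (mem_compl.1 hi), abs_zero, hF.map_zero],
      add_zero, ← sum_add_distrib]
    exact sum_le_sum fun i _ => by
      simpa using hF.abs_sub_le (xhat i) (xhat i - xbar i)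
  have hhat : costJ F xhat = costJT F T xhat + costJT F Tᶜ (xhat - xbar) := by
    rw [← costJT_add_costJT_compl F T]
    congr 1
    exact sum_congr rfl fun i hi => by simp [hsupp i (mem_compl.1 hi)]
  linarith

end Costs

section Restriction

variable {n : ℕ}

def restrictTo (T : Finset (Fin n)) (x : EuclideanSpace ℝ (Fin n)) : EuclideanSpace ℝ (Fin n) :=
  WithLp.toLp 2 fun i => if i ∈ T then x i else 0

@[simp]
theorem restrictTo_apply (T : Finset (Fin n)) (x : EuclideanSpace ℝ (Fin n)) (i : Fin n) :
    restrictTo T x i = if i ∈ T then x i else 0 :=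
  rfl

theorem sparse_restrictTo {k : ℕ} {T : Finset (Fin n)} (hT : #T ≤ k)
    (x : EuclideanSpace ℝ (Fin n)) : Sparse k (restrictTo T x) :=
  ⟨T, hT, fun _ hi => if_neg hi⟩

theorem restrictTo_add_restrictTo_compl (T : Finset (Fin n)) (x : EuclideanSpace ℝ (Fin n)) :
    restrictTo T x + restrictTo Tᶜ x = x := by
  ext i
  by_cases hi : i ∈ T <;> simp [hi]

theorem costJ_restrictTo {G : ℝ → ℝ} (hG : G 0 = 0) (T : Finset (Fin n))
    (x : EuclideanSpace ℝ (Fin n)) : costJ G (restrictTo T x) = costJT G T x := by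
  simp [costJ, costJT, apply_ite (fun t => G |t|), hG]

theorem costJ_neg (G : ℝ → ℝ) (x : EuclideanSpace ℝ (Fin n)) : costJ G (-x) = costJ G x := by
  simp [costJ]

end Restriction

section Transfer

variable {n k : ℕ} {F : ℝ → ℝ} {p : ℝ}

theorem NSP.of_rpow (hF : SparsenessMeasure F) (hp : 0 < p)
    (hratio : AntitoneOn (fun t => F t / t ^ p) (Set.Ioi 0)) (hmono : MonotoneOn F (Set.Ici 0))
    {ν : Submodule ℝ (EuclideanSpace ℝ (Fin n))} (hν : NSP ν k fun t => |t| ^ p) :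
    NSP ν k F := by
  intro z hz hz0 T hT
  obtain ⟨T', hcard, htop⟩ := exists_isTopSet (fun i => |z i|) (card_le_univ T)
  have hT' := costJT_lt_costJT_compl_of_rpow hF hp hratio htop (hν z hz hz0 T' (hcard ▸ hT))
  linarith [htop.costJT_sub_costJT_compl_le hF hmono hcard.ge]

variable {m : ℕ} {A : Matrix (Fin m) (Fin n) ℝ} {C : ℝ}

theorem RRC.norm_sub_le {G : ℝ → ℝ} (hA : RRC A k G C) {xbar xhat : EuclideanSpace ℝ (Fin n)}
    (hxbar : Sparse k xbar) {ε : ℝ} (hε : 0 < ε) (hres : ‖mulVecCLM A (xhat - xbar)‖ ≤ ε)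
    (hcost : costJ G xhat ≤ costJ G xbar) : ‖xbar - xhat‖ ≤ C * ε :=
  hA xbar hxbar ε hε _ hres xhat (by simpa [map_sub] using hε.le) hcost

theorem RRC.of_rpow (hF : SparsenessMeasure F) (hp : 0 < p)
    (hratio : AntitoneOn (fun t => F t / t ^ p) (Set.Ioi 0)) (hmono : MonotoneOn F (Set.Ici 0))
    (hA : RRC A k (fun t => |t| ^ p) C) : RRC A k F (2 * C) := by
  rintro xbar ⟨T, hTk, hsupp⟩ ε hε v hv xhat hres hcost
  set h := xhat - xbar
  have hAh : ‖mulVecCLM A h‖ ≤ 2 * ε :=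
    calc ‖mulVecCLM A h‖ = ‖(mulVecCLM A xhat - (mulVecCLM A xbar + v)) + v‖ := by
          rw [map_sub, sub_add_eq_sub_sub, sub_add_cancel]
      _ ≤ ε + ε := norm_add_le_of_le hres hv
      _ = 2 * ε := by ring
  obtain ⟨T', hcard, htop⟩ := exists_isTopSet (fun i => |h i|) (card_le_univ T)
  have hF' : costJT F T'ᶜ h ≤ costJT F T' h := by
    linarith [costJT_compl_le_costJT_of_costJ_le hF hsupp hcost,
      htop.costJT_sub_costJT_compl_le hF hmono hcard.ge]
  have hp' : costJT (fun t => |t| ^ p) T'ᶜ h ≤ costJT (fun t => |t| ^ p) T' h :=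
    not_lt.1 fun hlt => (costJT_lt_costJT_compl_of_rpow hF hp hratio htop hlt).not_ge hF'
  have hG : (fun t : ℝ => |t| ^ p) 0 = 0 := by simp [hp.ne']
  calc ‖xbar - xhat‖ = ‖restrictTo T' h - -restrictTo T'ᶜ h‖ := by
        rw [sub_neg_eq_add, restrictTo_add_restrictTo_compl, ← norm_neg, neg_sub]
    _ ≤ C * (2 * ε) := by
        refine hA.norm_sub_le (sparse_restrictTo (hcard ▸ hTk) h) (by positivity) ?_ ?_
        · rwa [← neg_add', add_comm, restrictTo_add_restrictTo_compl, map_neg, norm_neg]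
        · rwa [costJ_neg, costJ_restrictTo hG, costJ_restrictTo hG]
    _ = 2 * C * ε := by ring

end Transfer

theorem stmt15_general {n : ℕ} (F : ℝ → ℝ) (hF : SparsenessMeasure F)
    (p : ℝ) (hp0 : 0 < p)
    (hFmono : ∀ s t : ℝ, 0 ≤ s → s ≤ t → F s ≤ F t)
    (hratio : ∀ s t : ℝ, 0 < s → s ≤ t → F t / t ^ p ≤ F s / s ^ p)
    (k : ℕ) :
    (∀ ν : Submodule ℝ (EuclideanSpace ℝ (Fin n)),
      NSP ν k (fun t => |t| ^ p) → NSP ν k F) ∧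
    (∀ m : ℕ, ∀ A : Matrix (Fin m) (Fin n) ℝ,
      (∃ C > 0, RRC A k (fun t => |t| ^ p) C) → (∃ C > 0, RRC A k F C)) := by
  have hmono : MonotoneOn F (Set.Ici 0) := fun s hs t _ hst => hFmono s t hs hst
  have hanti : AntitoneOn (fun t => F t / t ^ p) (Set.Ioi 0) :=
    fun s hs t _ hst => hratio s t hs hst
  exact ⟨fun ν hν => hν.of_rpow hF hp0 hanti hmono,
    fun m A ⟨C, hC, hA⟩ => ⟨2 * C, by positivity, hA.of_rpow hF hp0 hanti hmono⟩⟩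

/-- Corollary 5: if `F` is a non-decreasing sparseness measure and
`F(t)/t^p` is non-increasing on `(0,∞)` for some `0 < p ≤ 1`, then (i) NSP for the
`ℓ_p` cost implies NSP for `J_F` (for any subspace), and (ii) RRC for the `ℓ_p` cost
implies RRC for `J_F` (for any matrix, with some constants). -/
theorem stmt15 {n : ℕ} (F : ℝ → ℝ) (hF : SparsenessMeasure F)
    (p : ℝ) (hp0 : 0 < p) (hp1 : p ≤ 1)
    (hFmono : ∀ s t : ℝ, 0 ≤ s → s ≤ t → F s ≤ F t)
    (hratio : ∀ s t : ℝ, 0 < s → s ≤ t → F t / t ^ p ≤ F s / s ^ p)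
    (k : ℕ) (hk : 1 ≤ k) :
    (∀ ν : Submodule ℝ (EuclideanSpace ℝ (Fin n)),
      NSP ν k (fun t => |t| ^ p) → NSP ν k F) ∧
    (∀ m : ℕ, ∀ A : Matrix (Fin m) (Fin n) ℝ,
      (∃ C > 0, RRC A k (fun t => |t| ^ p) C) → (∃ C > 0, RRC A k F C)) :=
  stmt15_general F hF p hp0 hFmono hratio k
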